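/- If an ideal I in a commutative Noetherian ring is generated by a regular sequence, then an intersection of symbolic-type powers construction ⊕_{d≥0} ⋂_α I_α^d, where each I_α is generated by a regular sequence and each I_α^d is integrally closed, yields integrally closed ideals: specifically, in ℂ[x^{±1},y], every power ⟨1-x, y⟩^d of the complete-intersection ideal ⟨1-x, y⟩ is integrally closed. -/

import Mathlib

/-!
Substituting `x ↦ 1 - t`, `y ↦ s t` gives a ring map `φ : R → ℂ[s]⟦t⟧`, the expansion of a
function along the lines through the point `(1, 0)`. If `r = ∑ gᵢ (1 - x)^(d-i) yⁱ ∈ 𝔪^d`, the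
coefficient of `t^d` in `φ r` is `∑ gᵢ(1, 0) sⁱ`; as the powers of `s` are linearly independent,
`t^(d+1) ∣ φ r` forces every `gᵢ(1, 0) = 0`, i.e. `r ∈ 𝔪^(d+1)`. So `𝔪^d` is the preimage of
`(t^d)`. Over a domain the `t`-adic order is a valuation, so these ideals are integrally
closed: if `f` had order `e < d`, then in `f^n + ∑ aᵢ f^(n-i) = 0` with `t^(di) ∣ aᵢ` the term
`f^n` would be the only one of order `e n`.
-/

noncomputable section

/-- `ℂ[x,x⁻¹,y]`, as polynomials in `y` over Laurent polynomials in `x`. -/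
abbrev R : Type := Polynomial (LaurentPolynomial ℂ)

def x : R := Polynomial.C (LaurentPolynomial.T 1)
def y : R := Polynomial.X

namespace PowerSeries

variable {D : Type*} [CommRing D] [IsDomain D]

theorem X_pow_dvd_of_integral_dependence {f : D⟦X⟧} {b : ℕ → D⟦X⟧} {n d : ℕ} (hn : 0 < n)
    (hb : ∀ i ∈ Finset.Icc 1 n, X ^ (d * i) ∣ b i)
    (h : f ^ n + ∑ i ∈ Finset.Icc 1 n, b i * f ^ (n - i) = 0) : X ^ d ∣ f := by
  by_contra hf
  set e := f.order.toNat
  set g := divXPowOrder f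
  have hfg : X ^ e * g = f := X_pow_order_mul_divXPowOrder
  have hg : constantCoeff g ≠ 0 :=
    constantCoeff_divXPowOrder_eq_zero_iff.not.2 (by rintro rfl; simp at hf)
  have hed : e < d := by
    by_contra! hde
    exact hf ((pow_dvd_pow X hde).trans X_pow_order_dvd)
  have hsum : X ^ (e * n + 1) ∣ ∑ i ∈ Finset.Icc 1 n, b i * f ^ (n - i) := by
    refine Finset.dvd_sum fun i hi => ?_
    obtain ⟨hi1, hin⟩ := Finset.mem_Icc.1 hi
    obtain ⟨k, rfl⟩ := Nat.exists_eq_add_of_le hin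
    have hexp : e * (i + k) + 1 ≤ d * i + e * k := by nlinarith
    calc X ^ (e * (i + k) + 1) ∣ X ^ (d * i) * (X ^ e) ^ k := by
          rw [← pow_mul, ← pow_add]; exact pow_dvd_pow X hexp
      _ ∣ b i * f ^ (i + k - i) := by
          rw [Nat.add_sub_cancel_left]
          exact mul_dvd_mul (hb i hi) (pow_dvd_pow_of_dvd X_pow_order_dvd k)
  have hgn : X ^ (e * n) * X ∣ X ^ (e * n) * g ^ n := by
    rw [← pow_succ, pow_mul, ← mul_pow, hfg, eq_neg_of_add_eq_zero_left h]
    exact hsum.neg_right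
  rw [mul_dvd_mul_iff_left (pow_ne_zero _ X_ne_zero), X_dvd_iff, map_pow] at hgn
  exact hg ((pow_eq_zero_iff hn.ne').1 hgn)

end PowerSeries

theorem Ideal.span_pair_pow_le {A : Type*} [CommRing A] (a b : A) (d : ℕ) :
    Ideal.span {a, b} ^ d ≤
      Ideal.span (Set.range fun i : Fin (d + 1) => a ^ (d - i) * b ^ (i : ℕ)) := by
  induction d with
  | zero =>
    rw [pow_zero, Ideal.one_eq_top, top_le_iff, Ideal.eq_top_iff_one]
    exact Ideal.subset_span ⟨0, by simp⟩
  | succ d ih =>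
    rw [pow_succ']
    refine (Ideal.mul_mono_right ih).trans ?_
    rw [Ideal.span_mul_span']
    refine Ideal.span_mono ?_
    rintro _ ⟨u, hu, _, ⟨i, rfl⟩, rfl⟩
    have hi : d + 1 - i = d - i + 1 := by omega
    rcases hu with rfl | rfl
    · exact ⟨i.castSucc, by simp only [Fin.val_castSucc, hi, pow_succ]; ring⟩
    · exact ⟨i.succ, by simp only [Fin.val_succ, Nat.reduceSubDiff, pow_succ]; ring⟩

open PowerSeries

def 𝔪 : Ideal R := Ideal.span {1 - x, y}

def ev : R →+* ℂ := Polynomial.eval₂RingHom (LaurentPolynomial.eval₂ (RingHom.id ℂ) 1) 0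

def φ : R →+* (Polynomial ℂ)⟦X⟧ :=
  Polynomial.eval₂RingHom
    (LaurentPolynomial.eval₂ (C.comp Polynomial.C)
      (isUnit_iff_constantCoeff.2 (by simp) : IsUnit (1 - X : (Polynomial ℂ)⟦X⟧)).unit)
    (C Polynomial.X * X)

theorem φ_x : φ x = 1 - X := by simp [φ, x]

theorem φ_y : φ y = C Polynomial.X * X := by simp [φ, y]

theorem ringHom_ext_of_x_y {A : Type*} [Semiring A] {f g : R →+* A}
    (hC : ∀ c, f (Polynomial.C (LaurentPolynomial.C c)) =
      g (Polynomial.C (LaurentPolynomial.C c)))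
    (hx : f x = g x) (hy : f y = g y) : f = g := by
  refine Polynomial.ringHom_ext (fun a => ?_) hy
  suffices f.comp Polynomial.C = g.comp Polynomial.C from RingHom.congr_fun this a
  refine IsLocalization.ringHom_ext (Submonoid.powers (Polynomial.X : Polynomial ℂ))
    (Polynomial.ringHom_ext (fun c => ?_) ?_)
  · simpa using hC c
  · simpa [x] using hx

theorem ev_x : ev x = 1 := by simp [ev, x]

theorem ev_y : ev y = 0 := by simp [ev, y]

theorem one_sub_x_mem : 1 - x ∈ 𝔪 := Ideal.subset_span (by simp)

theorem y_mem : y ∈ 𝔪 := Ideal.subset_span (by simp)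

theorem constantCoeff_φ (g : R) : constantCoeff (φ g) = Polynomial.C (ev g) := by
  refine RingHom.congr_fun (ringHom_ext_of_x_y (f := constantCoeff.comp φ)
    (g := Polynomial.C.comp ev) (fun c => by simp [φ, ev]) ?_ ?_) g
  · simp only [RingHom.comp_apply, φ_x, ev_x]
    simp
  · simp only [RingHom.comp_apply, φ_y, ev_y]
    simp

theorem mem_𝔪_of_ev_eq_zero {g : R} (hg : ev g = 0) : g ∈ 𝔪 := by
  have hmk : Ideal.Quotient.mk 𝔪 = (Ideal.Quotient.mk 𝔪).comp ((algebraMap ℂ R).comp ev) := by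
    refine ringHom_ext_of_x_y (f := Ideal.Quotient.mk 𝔪) (fun c => by simp [ev]) ?_ ?_
    · rw [RingHom.comp_apply, RingHom.comp_apply, ev_x, map_one, Ideal.Quotient.eq]
      simpa using neg_mem one_sub_x_mem
    · rw [RingHom.comp_apply, RingHom.comp_apply, ev_y, map_zero, map_zero,
        Ideal.Quotient.eq_zero_iff_mem]
      exact y_mem
  rw [← Ideal.Quotient.eq_zero_iff_mem, hmk]
  simp [hg]

theorem X_pow_dvd_φ_of_mem_pow {r : R} {k : ℕ} (hr : r ∈ 𝔪 ^ k) : X ^ k ∣ φ r := by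
  have hle : 𝔪 ≤ (Ideal.span {X}).comap φ := by
    rw [𝔪, Ideal.span_le]
    rintro _ (rfl | rfl)
    · simp [φ_x]
    · simp [φ_y, Ideal.mem_span_singleton]
  rw [← Ideal.mem_span_singleton, ← Ideal.span_singleton_pow]
  exact Ideal.le_comap_pow φ k (Ideal.pow_right_mono hle k hr)

theorem φ_sum_monomials {d : ℕ} (g : Fin (d + 1) → R) :
    φ (∑ i, g i * ((1 - x) ^ (d - i) * y ^ (i : ℕ))) =
      X ^ d * ∑ i, φ (g i) * C (Polynomial.X ^ (i : ℕ)) := by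
  simp only [map_sum, map_mul, map_pow, map_sub, map_one, φ_x, φ_y, Finset.mul_sum]
  refine Finset.sum_congr rfl fun i _ => ?_
  have hX : (X : (Polynomial ℂ)⟦X⟧) ^ d = X ^ (d - i) * X ^ (i : ℕ) := by
    rw [← pow_add, Nat.sub_add_cancel i.is_le]
  rw [sub_sub_cancel, mul_pow, hX]
  ring

theorem mem_pow_of_X_pow_dvd_φ {d : ℕ} {r : R} (hr : X ^ d ∣ φ r) : r ∈ 𝔪 ^ d := by
  induction d generalizing r with
  | zero => simp
  | succ d ih =>
    obtain ⟨g, rfl⟩ := Ideal.mem_span_range_iff_exists_fun.1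
      (Ideal.span_pair_pow_le _ _ d (ih ((pow_dvd_pow X d.le_succ).trans hr)))
    rw [φ_sum_monomials, pow_succ, mul_dvd_mul_iff_left (pow_ne_zero _ X_ne_zero),
      X_dvd_iff] at hr
    have hev : ∀ i, ev (g i) = 0 := by
      intro i
      simp only [map_sum, map_mul, constantCoeff_φ, constantCoeff_C] at hr
      have := congrArg (Polynomial.coeff · i) hr
      simp only [Polynomial.finsetSum_coeff, Polynomial.coeff_C_mul_X_pow] at this
      simpa [Fin.val_inj] using this
    rw [pow_succ' 𝔪]
    refine Ideal.sum_mem _ fun i _ => Ideal.mul_mem_mul (mem_𝔪_of_ev_eq_zero (hev i)) ?_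
    have h := Ideal.mul_mem_mul (Ideal.pow_mem_pow one_sub_x_mem (d - i))
      (Ideal.pow_mem_pow y_mem i)
    rwa [← pow_add 𝔪, Nat.sub_add_cancel i.is_le] at h

/-- In `ℂ[x^{±1},y]`, every power `⟨1-x, y⟩^d` of the complete-intersection ideal
`⟨1-x, y⟩` is integrally closed: if `r` satisfies an equation
`r^n + a₁ r^{n-1} + ⋯ + a_n = 0` with `aᵢ ∈ (⟨1-x,y⟩^d)^i`, then `r ∈ ⟨1-x,y⟩^d`. -/
theorem power_ideal_integrally_closed (d : ℕ) (r : R)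
    (h : ∃ (n : ℕ) (a : ℕ → R), 0 < n ∧
      (∀ i ∈ Finset.Icc 1 n, a i ∈ ((Ideal.span {1 - x, y} : Ideal R) ^ d) ^ i) ∧
      r ^ n + ∑ i ∈ Finset.Icc 1 n, a i * r ^ (n - i) = 0) :
    r ∈ (Ideal.span {1 - x, y} : Ideal R) ^ d := by
  obtain ⟨n, a, hn, ha, heq⟩ := h
  refine mem_pow_of_X_pow_dvd_φ (X_pow_dvd_of_integral_dependence (b := fun i => φ (a i)) hn
    (fun i hi => X_pow_dvd_φ_of_mem_pow ?_) ?_)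
  · rw [pow_mul 𝔪]
    exact ha i hi
  · simpa using congrArg φ heq
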